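/- arXiv:2309.01300 — 3 statements merged into one kernel-verified Lean document; each statement's English description precedes it below -/
import Mathlib

section
/- Let ψ be a critical branching mechanism (ψ'(0+) = 0) satisfying ∫^∞ 1/ψ < ∞, and let φ̂ denote the inverse of φ(λ) = ∫_λ^∞ 1/ψ(u) du. Then for every s > 0, lim_{t→∞} ψ(φ̂(t+s)) / ψ(φ̂(t)) = 1. -/
open MeasureTheory Set Filter

/-- A branching mechanism given by the Lévy–Khintchine formula. -/
def LevyMechanism (α σ : ℝ) (π : Measure ℝ) (ψ : ℝ → ℝ) : Prop :=
  0 ≤ σ ∧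
  Integrable (fun r => min r (r ^ 2)) (π.restrict (Set.Ioi 0)) ∧
  ∀ l : ℝ, ψ l = α * l + σ ^ 2 / 2 * l ^ 2 +
      ∫ r in Set.Ioi 0, (Real.exp (-l * r) - 1 + l * r) ∂π

/-! Put `a = φ̂(t+s) < b = φ̂(t)`. The defining integral gives `s = ∫_a^b 1/ψ ≥ (b - a)/ψ(b)`,
and convexity of `ψ` bounds the chord slope `(ψ(b) - ψ(a))/(b - a)` by the slope on `[b, 2b]`,
hence by `ψ(2b)/b`. Therefore `0 ≤ 1 - ψ(a)/ψ(b) ≤ 2s · ψ(2b)/(2b)`, which tends to `0` because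
`φ̂(t) → 0+` and `ψ(λ)/λ → ψ'(0+) = 0` by dominated convergence. -/

open Topology

lemma exp_neg_mul_sub_one_add_nonneg (l r : ℝ) : 0 ≤ Real.exp (-l * r) - 1 + l * r := by
  linarith [Real.add_one_le_exp (-l * r)]

lemma exp_neg_sub_one_add_le_min {x : ℝ} (hx : 0 ≤ x) :
    Real.exp (-x) - 1 + x ≤ min x (x ^ 2) := by
  have hexp : Real.exp (-x) ≤ 1 := Real.exp_le_one_iff.mpr (neg_nonpos.mpr hx)
  refine le_min (by linarith) ?_
  rcases le_total x 1 with hx1 | hx1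
  · have h := Real.abs_exp_sub_one_sub_id_le (x := -x) (by rwa [abs_neg, abs_of_nonneg hx])
    rw [neg_sq, sub_neg_eq_add] at h
    exact (abs_le.mp h).2
  · nlinarith

lemma exp_neg_mul_sub_one_add_le {l r c : ℝ} (hl : 0 ≤ l) (hr : 0 ≤ r) (hlc : l ≤ c)
    (hlc' : l ^ 2 ≤ c) : Real.exp (-l * r) - 1 + l * r ≤ c * min r (r ^ 2) := by
  have hc : 0 ≤ c := hl.trans hlc
  calc Real.exp (-l * r) - 1 + l * r ≤ min (l * r) ((l * r) ^ 2) := by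
        simpa only [neg_mul] using exp_neg_sub_one_add_le_min (mul_nonneg hl hr)
    _ ≤ min (c * r) (c * r ^ 2) := by
        rw [mul_pow]
        exact min_le_min (by gcongr) (by gcongr)
    _ = c * min r (r ^ 2) := (mul_min_of_nonneg _ _ hc).symm

section LevyIntegrand

variable {π : Measure ℝ} (hπ : Integrable (fun r => min r (r ^ 2)) (π.restrict (Ioi 0)))
include hπ

lemma integrable_exp_neg_mul_sub_one_add {l : ℝ} (hl : 0 ≤ l) :
    Integrable (fun r => Real.exp (-l * r) - 1 + l * r) (π.restrict (Ioi 0)) := by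
  refine (hπ.const_mul (max l (l ^ 2))).mono' (by fun_prop) ?_
  refine (ae_restrict_iff' measurableSet_Ioi).2 (ae_of_all _ fun r (hr : 0 < r) => ?_)
  rw [Real.norm_eq_abs, abs_of_nonneg (exp_neg_mul_sub_one_add_nonneg l r)]
  exact exp_neg_mul_sub_one_add_le hl hr.le (le_max_left _ _) (le_max_right _ _)

lemma convexOn_integral_exp_neg_mul_sub_one_add :
    ConvexOn ℝ (Ici 0) fun l => ∫ r in Ioi 0, (Real.exp (-l * r) - 1 + l * r) ∂π := by
  refine ⟨convex_Ici 0, fun x (hx : 0 ≤ x) y (hy : 0 ≤ y) a b ha hb hab => ?_⟩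
  have hIx := integrable_exp_neg_mul_sub_one_add hπ hx
  have hIy := integrable_exp_neg_mul_sub_one_add hπ hy
  simp only [smul_eq_mul]
  rw [← integral_const_mul, ← integral_const_mul,
    ← integral_add (hIx.const_mul a) (hIy.const_mul b)]
  refine integral_mono (integrable_exp_neg_mul_sub_one_add hπ (by positivity))
    ((hIx.const_mul a).add (hIy.const_mul b)) fun r => ?_
  have hexp := convexOn_exp.2 (mem_univ (-x * r)) (mem_univ (-y * r)) ha hb hab
  simp only [smul_eq_mul] at hexp
  have hlin : -(a * x + b * y) * r = a * (-x * r) + b * (-y * r) := by ring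
  rw [hlin]
  nlinarith

lemma tendsto_integral_exp_neg_mul_sub_one_add_div :
    Tendsto (fun l => (∫ r in Ioi 0, (Real.exp (-l * r) - 1 + l * r) ∂π) / l)
      (𝓝[>] 0) (𝓝 0) := by
  have hmem : Ioc (0 : ℝ) 1 ∈ 𝓝[>] (0 : ℝ) := Ioc_mem_nhdsGT zero_lt_one
  have hlim := tendsto_integral_filter_of_dominated_convergence
    (μ := π.restrict (Ioi 0)) (l := 𝓝[>] (0 : ℝ))
    (F := fun l r => (Real.exp (-l * r) - 1 + l * r) / l) (f := fun _ => 0) _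
    (Eventually.of_forall fun l => by fun_prop) ?_ hπ ?_
  · rw [integral_zero] at hlim
    refine hlim.congr' (eventually_of_mem self_mem_nhdsWithin fun l _ => ?_)
    exact integral_div _ _
  · filter_upwards [hmem] with l ⟨hl, hl1⟩
    refine (ae_restrict_iff' measurableSet_Ioi).2 (ae_of_all _ fun r (hr : 0 < r) => ?_)
    rw [Real.norm_eq_abs, abs_of_nonneg (div_nonneg (exp_neg_mul_sub_one_add_nonneg l r) hl.le),
      div_le_iff₀' hl]
    exact exp_neg_mul_sub_one_add_le hl.le hr.le le_rfl (by nlinarith)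
  · refine (ae_restrict_iff' measurableSet_Ioi).2 (ae_of_all _ fun r (hr : 0 < r) => ?_)
    have hupper : Tendsto (fun l : ℝ => l * r ^ 2) (𝓝[>] 0) (𝓝 0) :=
      (Continuous.tendsto' (f := fun l : ℝ => l * r ^ 2) (by fun_prop) 0 0
        (zero_mul _)).mono_left nhdsWithin_le_nhds
    refine tendsto_of_tendsto_of_tendsto_of_le_of_le' tendsto_const_nhds hupper ?_ ?_
    all_goals filter_upwards [self_mem_nhdsWithin] with l (hl : 0 < l)
    · exact div_nonneg (exp_neg_mul_sub_one_add_nonneg l r) hl.le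
    · have hle := (exp_neg_sub_one_add_le_min (mul_nonneg hl.le hr.le)).trans (min_le_right _ _)
      rw [← neg_mul] at hle
      rw [div_le_iff₀ hl]
      nlinarith

end LevyIntegrand

namespace LevyMechanism

variable {α σ : ℝ} {π : Measure ℝ} {ψ : ℝ → ℝ}

lemma apply_zero (hψ : LevyMechanism α σ π ψ) : ψ 0 = 0 := by
  simp [hψ.2.2]

lemma convexOn (hψ : LevyMechanism α σ π ψ) : ConvexOn ℝ (Ici 0) ψ := by
  have hψeq : ψ = (fun l => α * l) + (fun l => σ ^ 2 / 2 * l ^ 2) +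
      fun l => ∫ r in Ioi 0, (Real.exp (-l * r) - 1 + l * r) ∂π :=
    funext hψ.2.2
  rw [hψeq]
  exact (((LinearMap.mulLeft ℝ α).convexOn (convex_Ici 0)).add
    ((convexOn_pow 2).smul (by positivity))).add
    (convexOn_integral_exp_neg_mul_sub_one_add hψ.2.1)

lemma tendsto_div_self (hψ : LevyMechanism α σ π ψ) :
    Tendsto (fun l => ψ l / l) (𝓝[>] 0) (𝓝 α) := by
  have hquad : Tendsto (fun l : ℝ => α + σ ^ 2 / 2 * l) (𝓝[>] 0) (𝓝 α) :=
    (Continuous.tendsto' (by fun_prop) 0 α (by simp)).mono_left nhdsWithin_le_nhds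
  have hsum := hquad.add (tendsto_integral_exp_neg_mul_sub_one_add_div hψ.2.1)
  rw [add_zero] at hsum
  refine hsum.congr' (eventually_of_mem self_mem_nhdsWithin fun l (hl : 0 < l) => ?_)
  dsimp only
  rw [hψ.2.2 l]
  field_simp

end LevyMechanism

lemma ConvexOn.monotoneOn_Ici_of_isMinOn {𝕜 : Type*} [Field 𝕜] [LinearOrder 𝕜]
    [IsStrictOrderedRing 𝕜] {f : 𝕜 → 𝕜} {a : 𝕜} (hf : ConvexOn 𝕜 (Ici a) f)
    (hmin : IsMinOn f (Ici a) a) : MonotoneOn f (Ici a) := by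
  intro x (hx : a ≤ x) y (hy : a ≤ y) hxy
  rcases hx.eq_or_lt with rfl | hax
  · exact hmin hy
  rcases hxy.eq_or_lt with rfl | hxy
  · exact le_rfl
  have hslope := hf.slope_mono_adjacent (mem_Ici.2 le_rfl) hy hax hxy
  have hleft : 0 ≤ (f x - f a) / (x - a) :=
    div_nonneg (sub_nonneg.2 (hmin hax.le)) (sub_nonneg.2 hax.le)
  have hright := hleft.trans hslope
  rw [le_div_iff₀ (sub_pos.2 hxy), zero_mul] at hright
  linarith

lemma ConvexOn.abs_div_sub_one_le {f : ℝ → ℝ} (hf : ConvexOn ℝ (Ici 0) f) {a b s : ℝ}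
    (ha : 0 ≤ a) (hab : a < b) (hfab : f a ≤ f b) (hfb : 0 < f b) (hgap : b - a ≤ s * f b) :
    |f a / f b - 1| ≤ 2 * s * (f (2 * b) / (2 * b)) := by
  have hb : 0 < b := ha.trans_lt hab
  have hslope : (f b - f a) / (b - a) ≤ f (2 * b) / b := by
    calc (f b - f a) / (b - a) ≤ (f (2 * b) - f b) / (2 * b - b) :=
          hf.slope_mono_adjacent (mem_Ici.2 ha) (mem_Ici.2 (by positivity)) hab (by linarith)
      _ ≤ f (2 * b) / b := by
          rw [show 2 * b - b = b by ring]
          exact div_le_div_of_nonneg_right (sub_le_self _ hfb.le) hb.le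
  have hrate : 0 ≤ f (2 * b) / b :=
    (div_nonneg (sub_nonneg.2 hfab) (sub_nonneg.2 hab.le)).trans hslope
  have hdiff : f b - f a ≤ (b - a) * (f (2 * b) / b) := by
    rwa [div_le_iff₀' (sub_pos.2 hab)] at hslope
  calc |f a / f b - 1| = (f b - f a) / f b := by
        rw [abs_sub_comm, abs_of_nonneg (sub_nonneg.2 ((div_le_one hfb).2 hfab))]
        field_simp
    _ ≤ s * f b * (f (2 * b) / b) / f b := by
        gcongr
        exact hdiff.trans (mul_le_mul_of_nonneg_right hgap hrate)
    _ = 2 * s * (f (2 * b) / (2 * b)) := by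
        field_simp

lemma tendsto_nhdsGT_zero_of_antitoneOn {φ g : ℝ → ℝ} (hφ : AntitoneOn φ (Ioi 0))
    (hg : ∀ t > 0, 0 < g t ∧ φ (g t) = t) : Tendsto g atTop (𝓝[>] 0) := by
  refine tendsto_nhdsWithin_iff.2 ⟨tendsto_order.2 ⟨fun c hc => ?_, fun c hc => ?_⟩,
    (eventually_gt_atTop 0).mono fun t ht => (hg t ht).1⟩
  · exact (eventually_gt_atTop 0).mono fun t ht => hc.trans (hg t ht).1
  · filter_upwards [eventually_gt_atTop (max 0 (φ c))] with t ht
    obtain ⟨hgt, hφgt⟩ := hg t ((le_max_left _ _).trans_lt ht)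
    by_contra! hcg
    have := hφ hc hgt hcg
    rw [hφgt] at this
    exact (le_max_right _ _).trans_lt ht |>.not_ge this

section Phi

variable {ψ φ : ℝ → ℝ} (hψpos : ∀ l > (0 : ℝ), 0 < ψ l)
  (hint : ∀ l > (0 : ℝ), IntegrableOn (fun v => 1 / ψ v) (Ioi l))
  (hφ : ∀ l > (0 : ℝ), φ l = ∫ v in Ioi l, 1 / ψ v)
include hψpos hint hφ

lemma antitoneOn_of_eq_setIntegral_Ioi : AntitoneOn φ (Ioi 0) := by
  intro x (hx : 0 < x) y (hy : 0 < y) hxy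
  rw [hφ x hx, hφ y hy]
  refine setIntegral_mono_set (hint x hx) ?_ (Ioi_subset_Ioi hxy).eventuallyLE
  refine (ae_restrict_iff' measurableSet_Ioi).2 (ae_of_all _ fun v (hv : x < v) => ?_)
  exact one_div_nonneg.2 (hψpos v (hx.trans hv)).le

lemma sub_le_mul_of_eq_setIntegral_Ioi (hmono : MonotoneOn ψ (Ioi 0)) {a b : ℝ} (ha : 0 < a)
    (hab : a ≤ b) : b - a ≤ (φ a - φ b) * ψ b := by
  have hb : 0 < b := ha.trans_le hab
  have hφab : φ a - φ b = ∫ v in a..b, 1 / ψ v := by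
    rw [hφ a ha, hφ b hb, intervalIntegral.integral_Ioi_sub_Ioi (hint a ha) hab]
  have hlower : ∫ _ in a..b, 1 / ψ b ≤ ∫ v in a..b, 1 / ψ v := by
    refine intervalIntegral.integral_mono_on hab intervalIntegrable_const ?_ fun v hv => ?_
    · exact (intervalIntegrable_iff_integrableOn_Ioc_of_le hab).2
        ((hint a ha).mono_set Ioc_subset_Ioi_self)
    · have hv0 : 0 < v := ha.trans_le hv.1
      exact one_div_le_one_div_of_le (hψpos v hv0) (hmono hv0 hb hv.2)
  rw [intervalIntegral.integral_const, smul_eq_mul, ← hφab] at hlower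
  rwa [← div_le_iff₀ (hψpos b hb), div_eq_mul_one_div]

end Phi

/-- For a critical branching mechanism (`ψ'(0+) = 0`, i.e. `α = 0`) with
`∫^∞ 1/ψ < ∞`, one has `ψ(φ̂(t+s))/ψ(φ̂(t)) → 1` as `t → ∞`. -/
theorem stmt4 (σ : ℝ) (π : Measure ℝ) (ψ φ φhat : ℝ → ℝ)
    (hψ : LevyMechanism 0 σ π ψ)
    (hψpos : ∀ l > (0 : ℝ), 0 < ψ l)
    (hint : ∀ l > (0 : ℝ), IntegrableOn (fun v => 1 / ψ v) (Set.Ioi l))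
    (hφ : ∀ l > (0 : ℝ), φ l = ∫ v in Set.Ioi l, 1 / ψ v)
    (hφhat : ∀ t > (0 : ℝ), 0 < φhat t ∧ φ (φhat t) = t) :
    ∀ s > (0 : ℝ),
      Tendsto (fun t => ψ (φhat (t + s)) / ψ (φhat t)) atTop (nhds 1) := by
  intro s hs
  have hmin : IsMinOn ψ (Ici 0) 0 := isMinOn_iff.2 fun l (hl : 0 ≤ l) => by
    rcases hl.eq_or_lt with rfl | hl
    · exact le_rfl
    · rw [hψ.apply_zero]
      exact (hψpos l hl).le
  have hmono := hψ.convexOn.monotoneOn_Ici_of_isMinOn hmin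
  have hanti := antitoneOn_of_eq_setIntegral_Ioi hψpos hint hφ
  have hsmall : Tendsto (fun t => 2 * s * (ψ (2 * φhat t) / (2 * φhat t))) atTop (𝓝 0) := by
    have h2φhat := Filter.TendstoNhdsWithinIoi.const_mul two_pos
      (tendsto_nhdsGT_zero_of_antitoneOn hanti hφhat)
    rw [mul_zero] at h2φhat
    simpa using (hψ.tendsto_div_self.comp h2φhat).const_mul (2 * s)
  refine tendsto_sub_nhds_zero_iff.1 (squeeze_zero_norm' ?_ hsmall)
  filter_upwards [eventually_gt_atTop 0] with t ht
  obtain ⟨hb, hφb⟩ := hφhat t ht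
  obtain ⟨ha, hφa⟩ := hφhat (t + s) (by positivity)
  have hab : φhat (t + s) < φhat t := hanti.reflect_lt hb ha (by linarith)
  have hgap := sub_le_mul_of_eq_setIntegral_Ioi hψpos hint hφ
    (hmono.mono Ioi_subset_Ici_self) ha hab.le
  rw [hφa, hφb, add_sub_cancel_left] at hgap
  exact hψ.convexOn.abs_div_sub_one_le ha.le hab (hmono ha.le hb.le hab.le) (hψpos _ hb) hgap
end

section
/- Let ψ be a (sub)critical branching mechanism satisfying ∫^∞ 1/ψ < ∞, φ̂ the inverse of φ(λ) = ∫_λ^∞ 1/ψ(u) du. Then for every x > 0, ∫₀^∞ (1 - e^{-x φ̂(t)}) dt < ∞ if and only if ∫_{0+} u/ψ(u) du < ∞. -/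
open MeasureTheory Set Filter

/-! Since `1 - e^{-x φ̂(t)}` lies in `[0, 1]`, only large `t` matter, and there `φ̂(t) ≤ 1`, where
`x e^{-x} φ̂(t) ≤ 1 - e^{-x φ̂(t)} ≤ x φ̂(t)`. So the question is whether `φ̂` is integrable at
infinity. As `φ' = -1/ψ`, the substitution `t = φ(u)` turns `∫_{φ(1)}^∞ φ̂(t) dt` into
`∫_0^1 u / ψ(u) du`. -/

theorem one_sub_exp_neg_mul_le_mul (x y : ℝ) : 1 - Real.exp (-x * y) ≤ x * y := by
  linarith [Real.add_one_le_exp (-x * y)]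

theorem one_sub_exp_neg_mul_mem_Icc {x y : ℝ} (hx : 0 ≤ x) (hy : 0 ≤ y) :
    1 - Real.exp (-x * y) ∈ Icc 0 1 := by
  have hexp : Real.exp (-x * y) ≤ 1 := Real.exp_le_one_iff.mpr (by nlinarith)
  constructor <;> linarith [Real.exp_pos (-x * y)]

theorem mul_exp_neg_mul_le_one_sub_exp_neg_mul {x y : ℝ} (hx : 0 ≤ x) (hy₀ : 0 ≤ y)
    (hy₁ : y ≤ 1) : x * Real.exp (-x) * y ≤ 1 - Real.exp (-x * y) := by
  have hxy : x * y ≤ x := mul_le_of_le_one_right hx hy₁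
  have hexp : Real.exp (-x) ≤ Real.exp (-x * y) := Real.exp_le_exp.mpr (by linarith)
  -- `1 - e^{-z} ≥ z e^{-z}` is `e^z ≥ 1 + z` multiplied by `e^{-z}`
  have hchord : x * y * Real.exp (-x * y) ≤ 1 - Real.exp (-x * y) := by
    have h := Real.add_one_le_exp (x * y)
    have hmul : Real.exp (x * y) * Real.exp (-x * y) = 1 := by
      rw [← Real.exp_add]; ring_nf; exact Real.exp_zero
    nlinarith [Real.exp_pos (-x * y)]
  calc x * Real.exp (-x) * y = x * y * Real.exp (-x) := by ring
    _ ≤ x * y * Real.exp (-x * y) := by gcongr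
    _ ≤ 1 - Real.exp (-x * y) := hchord

theorem integrable_one_sub_exp_neg_mul_iff {α : Type*} [MeasurableSpace α] {μ : Measure α}
    {h : α → ℝ} {x : ℝ} (hx : 0 < x) (hh : AEStronglyMeasurable h μ)
    (h01 : ∀ᵐ t ∂μ, 0 ≤ h t ∧ h t ≤ 1) :
    Integrable (fun t => 1 - Real.exp (-x * h t)) μ ↔ Integrable h μ := by
  constructor
  · intro hf
    have hc : 0 < x * Real.exp (-x) := by positivity
    refine (hf.const_mul (x * Real.exp (-x))⁻¹).mono' hh ?_
    filter_upwards [h01] with t ⟨h0, h1⟩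
    rw [Real.norm_of_nonneg h0, le_inv_mul_iff₀ hc]
    exact mul_exp_neg_mul_le_one_sub_exp_neg_mul hx.le h0 h1
  · intro hi
    refine (hi.const_mul x).mono' (by fun_prop) ?_
    filter_upwards [h01] with t ⟨h0, _⟩
    rw [Real.norm_of_nonneg (one_sub_exp_neg_mul_mem_Icc hx.le h0).1]
    exact one_sub_exp_neg_mul_le_mul x (h t)

theorem integrableOn_Ioi_iff_of_bounded {f : ℝ → ℝ} {a c M : ℝ} (hac : a ≤ c)
    (hf : AEStronglyMeasurable f (volume.restrict (Ioc a c)))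
    (hbdd : ∀ t ∈ Ioc a c, ‖f t‖ ≤ M) :
    IntegrableOn f (Ioi a) ↔ IntegrableOn f (Ioi c) := by
  have hIoc : IntegrableOn f (Ioc a c) :=
    (integrableOn_const (C := M) measure_Ioc_lt_top.ne).mono' hf
      (ae_restrict_of_forall_mem measurableSet_Ioc hbdd)
  rw [← Ioc_union_Ioi_eq_Ioi hac, integrableOn_union]
  exact and_iff_right hIoc

theorem hasDerivAt_integral_Ioi {g : ℝ → ℝ} {a s : ℝ} (hg : IntegrableOn g (Ioi a))
    (has : a < s) (hgs : ContinuousAt g s) :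
    HasDerivAt (fun l => ∫ v in Ioi l, g v) (-g s) s := by
  have hii : IntervalIntegrable g volume a s :=
    (intervalIntegrable_iff_integrableOn_Ioc_of_le has.le).mpr (hg.mono_set Ioc_subset_Ioi_self)
  have hmeas : StronglyMeasurableAtFilter g (nhds s) volume :=
    AEStronglyMeasurable.stronglyMeasurableAtFilter_of_mem hg.aestronglyMeasurable
      (Ioi_mem_nhds has)
  have hderiv := (intervalIntegral.integral_hasDerivAt_right hii hmeas hgs).const_sub
    (∫ v in Ioi a, g v)
  refine hderiv.congr_of_eventuallyEq ?_
  filter_upwards [Ioi_mem_nhds has] with l hl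
  rw [← intervalIntegral.integral_Ioi_sub_Ioi hg hl.le]
  ring

section TailIntegral

variable {g φ φhat : ℝ → ℝ}

theorem hasDerivAt_of_eqOn_integral_Ioi (hgcont : ContinuousOn g (Ioi 0))
    (hint : ∀ l > (0 : ℝ), IntegrableOn g (Ioi l))
    (hφ : ∀ l > (0 : ℝ), φ l = ∫ v in Ioi l, g v) {s : ℝ} (hs : 0 < s) :
    HasDerivAt φ (-g s) s := by
  refine (hasDerivAt_integral_Ioi (hint (s / 2) (by positivity)) (by linarith)
    (hgcont.continuousAt (Ioi_mem_nhds hs))).congr_of_eventuallyEq ?_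
  filter_upwards [Ioi_mem_nhds hs] with l hl using hφ l hl

theorem strictAntiOn_of_eqOn_integral_Ioi (hgpos : ∀ l > (0 : ℝ), 0 < g l)
    (hgcont : ContinuousOn g (Ioi 0)) (hint : ∀ l > (0 : ℝ), IntegrableOn g (Ioi l))
    (hφ : ∀ l > (0 : ℝ), φ l = ∫ v in Ioi l, g v) : StrictAntiOn φ (Ioi 0) := by
  have hderiv : ∀ s ∈ Ioi (0 : ℝ), HasDerivAt φ (-g s) s := fun s hs =>
    hasDerivAt_of_eqOn_integral_Ioi hgcont hint hφ hs
  refine strictAntiOn_of_hasDerivWithinAt_neg (f' := fun s => -g s) (convex_Ioi 0)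
    (fun s hs => (hderiv s hs).continuousAt.continuousWithinAt) ?_ ?_ <;>
    rw [interior_Ioi]
  · exact fun s hs => (hderiv s hs).hasDerivWithinAt
  · exact fun s hs => neg_neg_of_pos (hgpos s hs)

theorem pos_of_eqOn_integral_Ioi (hgpos : ∀ l > (0 : ℝ), 0 < g l)
    (hgcont : ContinuousOn g (Ioi 0)) (hint : ∀ l > (0 : ℝ), IntegrableOn g (Ioi l))
    (hφ : ∀ l > (0 : ℝ), φ l = ∫ v in Ioi l, g v) {l : ℝ} (hl : 0 < l) : 0 < φ l := by
  have hφnonneg : 0 ≤ φ (l + 1) := by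
    rw [hφ (l + 1) (by positivity)]
    exact setIntegral_nonneg measurableSet_Ioi fun v hv =>
      (hgpos v ((by positivity : (0 : ℝ) < l + 1).trans hv)).le
  have hlt : φ (l + 1) < φ l :=
    strictAntiOn_of_eqOn_integral_Ioi hgpos hgcont hint hφ hl
      (show (0 : ℝ) < l + 1 by positivity) (lt_add_one l)
  linarith


theorem leftInvOn_of_rightInverse (hanti : StrictAntiOn φ (Ioi 0))
    (hφpos : ∀ l > (0 : ℝ), 0 < φ l) (hφhat : ∀ t > (0 : ℝ), 0 < φhat t ∧ φ (φhat t) = t) :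
    LeftInvOn φhat φ (Ioi 0) := fun s hs =>
  hanti.injOn (hφhat (φ s) (hφpos s hs)).1 hs (hφhat (φ s) (hφpos s hs)).2

theorem antitoneOn_of_rightInverse (hanti : StrictAntiOn φ (Ioi 0))
    (hφhat : ∀ t > (0 : ℝ), 0 < φhat t ∧ φ (φhat t) = t) : AntitoneOn φhat (Ioi 0) := by
  intro t ht t' ht' htt'
  rw [← hanti.le_iff_ge (hφhat t ht).1 (hφhat t' ht').1, (hφhat t ht).2, (hφhat t' ht').2]
  exact htt'

theorem mapsTo_Ioi_Ioo_of_rightInverse (hanti : StrictAntiOn φ (Ioi 0))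
    (hφhat : ∀ t > (0 : ℝ), 0 < φhat t ∧ φ (φhat t) = t) {b : ℝ} (hb : 0 < φ b)
    (hb' : 0 < b) : MapsTo φhat (Ioi (φ b)) (Ioo 0 b) := by
  intro t (ht : φ b < t)
  have ht₀ : 0 < t := hb.trans ht
  refine ⟨(hφhat t ht₀).1, ?_⟩
  rwa [← hanti.lt_iff_gt hb' (hφhat t ht₀).1, (hφhat t ht₀).2]

theorem image_Ioo_of_rightInverse (hanti : StrictAntiOn φ (Ioi 0))
    (hφhat : ∀ t > (0 : ℝ), 0 < φhat t ∧ φ (φhat t) = t) {b : ℝ} (hb : 0 < φ b)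
    (hb' : 0 < b) : φ '' Ioo 0 b = Ioi (φ b) := by
  refine Subset.antisymm ?_ fun t ht => ?_
  · rintro _ ⟨s, ⟨hs₀, hsb⟩, rfl⟩
    exact hanti hs₀ hb' hsb
  · exact ⟨φhat t, mapsTo_Ioi_Ioo_of_rightInverse hanti hφhat hb hb' ht,
      (hφhat t (hb.trans ht)).2⟩

theorem integrableOn_rightInverse_Ioi_iff (hgpos : ∀ l > (0 : ℝ), 0 < g l)
    (hgcont : ContinuousOn g (Ioi 0)) (hint : ∀ l > (0 : ℝ), IntegrableOn g (Ioi l))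
    (hφ : ∀ l > (0 : ℝ), φ l = ∫ v in Ioi l, g v)
    (hφhat : ∀ t > (0 : ℝ), 0 < φhat t ∧ φ (φhat t) = t) {b : ℝ} (hb : 0 < b) :
    IntegrableOn φhat (Ioi (φ b)) ↔ IntegrableOn (fun u => g u * u) (Ioo 0 b) := by
  have hanti := strictAntiOn_of_eqOn_integral_Ioi hgpos hgcont hint hφ
  have hφpos : ∀ l > (0 : ℝ), 0 < φ l := fun l hl =>
    pos_of_eqOn_integral_Ioi hgpos hgcont hint hφ hl
  rw [← image_Ioo_of_rightInverse hanti hφhat (hφpos b hb) hb,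
    integrableOn_image_iff_integrableOn_abs_deriv_smul measurableSet_Ioo
      (fun s hs => (hasDerivAt_of_eqOn_integral_Ioi hgcont hint hφ hs.1).hasDerivWithinAt)
      (hanti.injOn.mono Ioo_subset_Ioi_self) φhat]
  refine integrableOn_congr_fun (fun s hs => ?_) measurableSet_Ioo
  rw [leftInvOn_of_rightInverse hanti hφpos hφhat hs.1, abs_neg, abs_of_pos (hgpos s hs.1),
    smul_eq_mul]

end TailIntegral

/-- For a (sub)critical branching mechanism, the expected extinction time
`∫₀^∞ (1 − e^{-x φ̂(t)}) dt` is finite if and only if `∫_{0+} u/ψ(u) du < ∞`. -/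
theorem stmt9 (ψ φ φhat : ℝ → ℝ)
    (hψpos : ∀ l > (0 : ℝ), 0 < ψ l)
    (hψcont : ContinuousOn ψ (Set.Ioi 0))
    (hint : ∀ l > (0 : ℝ), IntegrableOn (fun v => 1 / ψ v) (Set.Ioi l))
    (hφ : ∀ l > (0 : ℝ), φ l = ∫ v in Set.Ioi l, 1 / ψ v)
    (hφhat : ∀ t > (0 : ℝ), 0 < φhat t ∧ φ (φhat t) = t) :
    ∀ x > (0 : ℝ),
      (IntegrableOn (fun t => 1 - Real.exp (-x * φhat t)) (Set.Ioi 0) ↔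
        IntegrableOn (fun u => u / ψ u) (Set.Ioo 0 1)) := by
  intro x hx
  have hgpos : ∀ l > (0 : ℝ), 0 < 1 / ψ l := fun l hl => one_div_pos.mpr (hψpos l hl)
  have hgcont : ContinuousOn (fun v => 1 / ψ v) (Ioi 0) :=
    continuousOn_const.div hψcont fun v hv => (hψpos v hv).ne'
  have hanti := strictAntiOn_of_eqOn_integral_Ioi hgpos hgcont hint hφ
  have hφ1 : 0 < φ 1 := pos_of_eqOn_integral_Ioi hgpos hgcont hint hφ one_pos
  have hmaps := mapsTo_Ioi_Ioo_of_rightInverse hanti hφhat hφ1 one_pos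
  have hmeas : AEStronglyMeasurable φhat (volume.restrict (Ioi 0)) :=
    (aemeasurable_restrict_of_antitoneOn measurableSet_Ioi
      (antitoneOn_of_rightInverse hanti hφhat)).aestronglyMeasurable
  have hfmeas : AEStronglyMeasurable (fun t => 1 - Real.exp (-x * φhat t))
      (volume.restrict (Ioi 0)) := by fun_prop
  calc IntegrableOn (fun t => 1 - Real.exp (-x * φhat t)) (Ioi 0)
      ↔ IntegrableOn (fun t => 1 - Real.exp (-x * φhat t)) (Ioi (φ 1)) volume :=
        integrableOn_Ioi_iff_of_bounded (M := 1) hφ1.le (hfmeas.mono_set Ioc_subset_Ioi_self)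
          fun t ht => by
            obtain ⟨hf₀, hf₁⟩ := one_sub_exp_neg_mul_mem_Icc hx.le (hφhat t ht.1).1.le
            rwa [Real.norm_of_nonneg hf₀]
    _ ↔ IntegrableOn φhat (Ioi (φ 1)) volume :=
        integrable_one_sub_exp_neg_mul_iff hx (hmeas.mono_set (Ioi_subset_Ioi hφ1.le))
          (ae_restrict_of_forall_mem measurableSet_Ioi fun t ht =>
            ⟨(hmaps ht).1.le, (hmaps ht).2.le⟩)
    _ ↔ IntegrableOn (fun u => 1 / ψ u * u) (Ioo 0 1) :=
        integrableOn_rightInverse_Ioi_iff hgpos hgcont hint hφ hφhat one_pos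
    _ ↔ IntegrableOn (fun u => u / ψ u) (Ioo 0 1) := by simp only [one_div_mul_eq_div]
end

section
/- Let ψ be a (sub)critical branching mechanism satisfying ∫^∞ 1/ψ < ∞, φ(λ) = ∫_λ^∞ 1/ψ(u) du with inverse φ̂, and let W be the scale function with Laplace transform 1/ψ. For s > 0 define μ_s(dx) = e^{-φ̂(s)x} W(x)/(sx) dx on (0,∞). Then μ_s is a probability measure and its Laplace transform is ∫₀^∞ e^{-λx} μ_s(dx) = φ(λ + φ̂(s))/s for all λ ≥ 0. -/
/-!
Write `e^{-bx} W(x)/x = ∫_b^∞ e^{-ux} W(x) du`. By Tonelli and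
`∫₀^∞ e^{-ux} W(x) dx = 1/ψ(u)`, this gives `∫₀^∞ e^{-bx} W(x)/x dx = ∫_b^∞ 1/ψ = φ(b)` for
every `b > 0`. Multiplying the density of `μ_s` by `e^{-λx}` replaces `φ̂(s)` by `λ + φ̂(s)`, so
the Laplace transform of `μ_s` is `φ(λ + φ̂(s))/s`; at `λ = 0` it is `φ(φ̂(s))/s = 1`.
-/

open MeasureTheory Set Real
open scoped ENNReal

lemma lintegral_exp_neg_mul_Ioi {x : ℝ} (hx : 0 < x) (b : ℝ) :
    ∫⁻ u in Ioi b, ENNReal.ofReal (exp (-u * x)) = ENNReal.ofReal (exp (-b * x) / x) := by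
  have hexp : ∀ u, exp (-u * x) = exp (-x * u) := fun u => by ring_nf
  simp_rw [hexp]
  rw [← ofReal_integral_eq_lintegral_ofReal (integrableOn_exp_mul_Ioi (neg_lt_zero.2 hx) b)
    (ae_of_all _ fun u => (exp_pos _).le), integral_exp_mul_Ioi (neg_lt_zero.2 hx), div_neg,
    neg_div, neg_neg]

theorem lintegral_exp_neg_mul_div_eq_lintegral_Ioi {g : ℝ → ℝ≥0∞}
    (hg : AEMeasurable g (volume.restrict (Ioi 0))) (b : ℝ) :
    ∫⁻ x in Ioi 0, ENNReal.ofReal (exp (-b * x) / x) * g x =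
      ∫⁻ u in Ioi b, ∫⁻ x in Ioi 0, ENNReal.ofReal (exp (-u * x)) * g x := by
  calc ∫⁻ x in Ioi 0, ENNReal.ofReal (exp (-b * x) / x) * g x
      = ∫⁻ x in Ioi 0, ∫⁻ u in Ioi b, ENNReal.ofReal (exp (-u * x)) * g x := by
        refine setLIntegral_congr_fun measurableSet_Ioi fun x hx => ?_
        rw [lintegral_mul_const _ (by fun_prop), lintegral_exp_neg_mul_Ioi hx]
    _ = _ := lintegral_lintegral_swap ((by fun_prop : AEMeasurable
        (fun z : ℝ × ℝ => ENNReal.ofReal (exp (-z.2 * z.1))) _).mul hg.comp_fst)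

theorem integral_exp_neg_mul_withDensity {μ : Measure ℝ} {W : ℝ → ℝ}
    (hW : AEMeasurable W μ) (a s l : ℝ) :
    ∫ x, exp (-l * x) ∂μ.withDensity (fun x => ENNReal.ofReal (exp (-a * x) * W x / (s * x))) =
      (∫⁻ x, ENNReal.ofReal (exp (-(l + a) * x) * W x / (s * x)) ∂μ).toReal := by
  rw [integral_eq_lintegral_of_nonneg_ae (ae_of_all _ fun x => (exp_pos _).le) (by fun_prop),
    lintegral_withDensity_eq_lintegral_mul₀ (by fun_prop) (by fun_prop)]
  congr 1
  refine lintegral_congr fun x => ?_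
  rw [Pi.mul_apply, ← ENNReal.ofReal_mul' (exp_pos _).le, neg_mul, neg_add, add_mul, exp_add]
  ring_nf

theorem lintegral_ofReal_div_const_mul {μ : Measure ℝ} {f : ℝ → ℝ} {s : ℝ} (hs : 0 < s) :
    ∫⁻ x, ENNReal.ofReal (f x / (s * x)) ∂μ =
      (∫⁻ x, ENNReal.ofReal (f x / x) ∂μ) / ENNReal.ofReal s := by
  simp_rw [mul_comm s, ← div_div, ENNReal.ofReal_div_of_pos hs, div_eq_mul_inv]
  exact lintegral_mul_const' _ _ (ENNReal.inv_ne_top.2 (ENNReal.ofReal_pos.2 hs).ne')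

theorem lintegral_exp_neg_mul_mul_div {ψ W φ : ℝ → ℝ} (hψpos : ∀ l > (0 : ℝ), 0 < ψ l)
    (hint : ∀ l > (0 : ℝ), IntegrableOn (fun v => 1 / ψ v) (Ioi l))
    (hφ : ∀ l > (0 : ℝ), φ l = ∫ v in Ioi l, 1 / ψ v)
    (hW : AEMeasurable W (volume.restrict (Ioi 0))) (hWpos : ∀ x > (0 : ℝ), 0 < W x)
    (hLap : ∀ l > (0 : ℝ), ∫ x in Ioi 0, exp (-l * x) * W x = 1 / ψ l) {b : ℝ} (hb : 0 < b) :
    ∫⁻ x in Ioi 0, ENNReal.ofReal (exp (-b * x) * W x / x) = ENNReal.ofReal (φ b) := by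
  have hLap_lintegral : ∀ u ∈ Ioi b,
      ∫⁻ x in Ioi 0, ENNReal.ofReal (exp (-u * x)) * ENNReal.ofReal (W x) =
        ENNReal.ofReal (1 / ψ u) := by
    intro u hu
    have hu₀ : 0 < u := hb.trans hu
    have hint_u : IntegrableOn (fun x => exp (-u * x) * W x) (Ioi 0) :=
      .of_integral_ne_zero (by rw [hLap u hu₀]; exact one_div_ne_zero (hψpos u hu₀).ne')
    rw [← hLap u hu₀, ofReal_integral_eq_lintegral_ofReal hint_u
      ((ae_restrict_iff' measurableSet_Ioi).2 (ae_of_all _ fun x hx =>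
        mul_nonneg (exp_pos _).le (hWpos x hx).le))]
    simp_rw [ENNReal.ofReal_mul (exp_pos _).le]
  calc ∫⁻ x in Ioi 0, ENNReal.ofReal (exp (-b * x) * W x / x)
      = ∫⁻ x in Ioi 0, ENNReal.ofReal (exp (-b * x) / x) * ENNReal.ofReal (W x) := by
        refine setLIntegral_congr_fun measurableSet_Ioi fun x hx => ?_
        rw [← ENNReal.ofReal_mul (div_nonneg (exp_pos _).le hx.le), div_mul_eq_mul_div]
    _ = ∫⁻ u in Ioi b, ENNReal.ofReal (1 / ψ u) := by
        rw [lintegral_exp_neg_mul_div_eq_lintegral_Ioi hW.ennreal_ofReal]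
        exact setLIntegral_congr_fun measurableSet_Ioi hLap_lintegral
    _ = ENNReal.ofReal (φ b) := by
        rw [hφ b hb, ofReal_integral_eq_lintegral_ofReal (hint b hb)
          ((ae_restrict_iff' measurableSet_Ioi).2 (ae_of_all _ fun u hu =>
            (one_div_pos.2 (hψpos u (hb.trans hu))).le))]

theorem stmt12_general (ψ W φ φhat : ℝ → ℝ)
    (hψpos : ∀ l > (0 : ℝ), 0 < ψ l)
    (hint : ∀ l > (0 : ℝ), IntegrableOn (fun v => 1 / ψ v) (Set.Ioi l))
    (hφ : ∀ l > (0 : ℝ), φ l = ∫ v in Set.Ioi l, 1 / ψ v)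
    (hφhat : ∀ t > (0 : ℝ), 0 < φhat t ∧ φ (φhat t) = t)
    (hWcont : ContinuousOn W (Set.Ici 0))
    (hWpos : ∀ x > (0 : ℝ), 0 < W x)
    (hLap : ∀ l > (0 : ℝ), ∫ x in Set.Ioi 0, Real.exp (-l * x) * W x = 1 / ψ l) :
    ∀ s > (0 : ℝ),
      IsProbabilityMeasure
        ((volume.restrict (Set.Ioi 0)).withDensity
          (fun x => ENNReal.ofReal (Real.exp (-(φhat s) * x) * W x / (s * x)))) ∧
      ∀ l ≥ (0 : ℝ),
        (∫ x, Real.exp (-l * x)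
          ∂((volume.restrict (Set.Ioi 0)).withDensity
            (fun x => ENNReal.ofReal (Real.exp (-(φhat s) * x) * W x / (s * x))))) =
          φ (l + φhat s) / s := by
  intro s hs
  obtain ⟨ha, hφa⟩ := hφhat s hs
  have hW : AEMeasurable W (volume.restrict (Ioi 0)) :=
    (hWcont.mono Ioi_subset_Ici_self).aemeasurable measurableSet_Ioi
  have hdens : ∀ b > 0, ∫⁻ x in Ioi 0, ENNReal.ofReal (exp (-b * x) * W x / (s * x)) =
      ENNReal.ofReal (φ b / s) := fun b hb => by
    rw [lintegral_ofReal_div_const_mul hs,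
      lintegral_exp_neg_mul_mul_div hψpos hint hφ hW hWpos hLap hb, ENNReal.ofReal_div_of_pos hs]
  refine ⟨⟨?_⟩, fun l hl => ?_⟩
  · rw [withDensity_apply _ MeasurableSet.univ, Measure.restrict_univ, hdens _ ha, hφa,
      div_self hs.ne', ENNReal.ofReal_one]
  · have hb : 0 < l + φhat s := by linarith
    have hφ_nonneg : 0 ≤ φ (l + φhat s) := by
      rw [hφ _ hb]
      exact setIntegral_nonneg measurableSet_Ioi fun u hu =>
        (one_div_pos.2 (hψpos u (hb.trans hu))).le
    rw [integral_exp_neg_mul_withDensity hW, hdens _ hb,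
      ENNReal.toReal_ofReal (div_nonneg hφ_nonneg hs.le)]

/-- The size-biased stationary measure `μ_s(dx) = e^{-φ̂(s)x} W(x)/(sx) dx` is a
probability measure on `(0,∞)` with Laplace transform `λ ↦ φ(λ + φ̂(s))/s`. -/
theorem stmt12 (ψ W φ φhat : ℝ → ℝ)
    (hψpos : ∀ l > (0 : ℝ), 0 < ψ l)
    (hint : ∀ l > (0 : ℝ), IntegrableOn (fun v => 1 / ψ v) (Set.Ioi l))
    (hφ : ∀ l > (0 : ℝ), φ l = ∫ v in Set.Ioi l, 1 / ψ v)
    (hφhat : ∀ t > (0 : ℝ), 0 < φhat t ∧ φ (φhat t) = t)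
    (hWmono : StrictMonoOn W (Set.Ici 0))
    (hWcont : ContinuousOn W (Set.Ici 0))
    (hWpos : ∀ x > (0 : ℝ), 0 < W x)
    (hLap : ∀ l > (0 : ℝ), ∫ x in Set.Ioi 0, Real.exp (-l * x) * W x = 1 / ψ l) :
    ∀ s > (0 : ℝ),
      IsProbabilityMeasure
        ((volume.restrict (Set.Ioi 0)).withDensity
          (fun x => ENNReal.ofReal (Real.exp (-(φhat s) * x) * W x / (s * x)))) ∧
      ∀ l ≥ (0 : ℝ),
        (∫ x, Real.exp (-l * x)
          ∂((volume.restrict (Set.Ioi 0)).withDensity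
            (fun x => ENNReal.ofReal (Real.exp (-(φhat s) * x) * W x / (s * x))))) =
          φ (l + φhat s) / s :=
  stmt12_general ψ W φ φhat hψpos hint hφ hφhat hWcont hWpos hLap
end
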